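/- arXiv:2405.06989 — 2 statements merged into one kernel-verified Lean document; each statement's English description precedes it below -/
import Mathlib

section
/- Let λ, μ be real numbers with λ ≠ 0 and μ > 0, and let α be a real root of the quadratic equation λα² + (λ² − μ² + 1)α + λ = 0 (so α ≠ 0). Then the point z = −1/α lies on one of the circles |z| = 1 or |z − λ| = μ if and only if α = 1 or α = −1; that is, (|1/α| = 1 or |λ + 1/α| = μ) holds if and only if α² = 1. -/
/-- For a real root α of λα² + (λ² − μ² + 1)α + λ = 0 (λ ≠ 0, μ > 0),
the point z = −1/α lies on |z| = 1 or on |z − λ| = μ iff α = ±1. -/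
theorem stmt_3 (lam μ α : ℝ) (hlam : lam ≠ 0) (hμ : μ > 0)
    (hroot : lam * α ^ 2 + (lam ^ 2 - μ ^ 2 + 1) * α + lam = 0) :
    α ≠ 0 ∧ ((|1 / α| = 1 ∨ |lam + 1 / α| = μ) ↔ α ^ 2 = 1) := by
  have hα : α ≠ 0 := by
    rintro rfl; simp at hroot; exact hlam hroot
  refine ⟨hα, ?_, ?_⟩
  · rintro (h | h)
    · have h2 : (1 / α) ^ 2 = 1 := by rw [← sq_abs, h]; norm_num
      field_simp at h2
      nlinarith [sq_nonneg α]
    · have h2 : (lam + 1 / α) ^ 2 = μ ^ 2 := by rw [← sq_abs, h]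
      have key : (α ^ 2 - 1) * (lam * α + 1) = 0 := by
        have hα2 : α ^ 2 ≠ 0 := pow_ne_zero _ hα
        field_simp at h2
        linear_combination α * hroot - h2
      rcases mul_eq_zero.1 key with hk | hk
      · linarith
      · exfalso
        have : lam + 1 / α = 0 := by field_simp; linarith [hk]
        rw [this] at h
        simp at h; linarith
  · intro h
    left
    have : (α - 1) * (α + 1) = 0 := by nlinarith
    rcases mul_eq_zero.1 this with hk | hk
    · have : α = 1 := by linarith
      subst this; norm_num
    · have : α = -1 := by linarith
      subst this; norm_num
end

section
/- Let λ, μ be real numbers with λ ≠ 0, μ > 0, and suppose either μ > 1 + |λ| or μ < 1 − |λ| (so the circles |z| = 1 and |z − λ| = μ have no point in common, one encircling the other). Then every real root α of the quadratic equation λα² + (λ² − μ² + 1)α + λ = 0 satisfies 1 + αλ > 0. -/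
/-- If λ ≠ 0, μ > 0 and either μ > 1 + |λ| or μ < 1 − |λ|, then every
real root α of λα² + (λ² − μ² + 1)α + λ = 0 satisfies 1 + αλ > 0. -/
theorem stmt_6 (lam μ : ℝ) (hlam : lam ≠ 0) (hμ : μ > 0)
    (hsep : μ > 1 + |lam| ∨ μ < 1 - |lam|) :
    ∀ α : ℝ, lam * α ^ 2 + (lam ^ 2 - μ ^ 2 + 1) * α + lam = 0 →
      1 + α * lam > 0 := by
  intro α heq
  by_contra hc
  push_neg at hc
  have hμ2 : 0 < μ ^ 2 := by positivity
  rcases hlam.lt_or_gt with hneg | hpos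
  · rw [abs_of_neg hneg] at hsep
    have hα : 0 < α := by nlinarith
    rcases hsep with h | h
    · have hk : 0 < μ ^ 2 - (1 - lam) ^ 2 := by nlinarith
      nlinarith [mul_pos hα hk, mul_nonpos_of_nonpos_of_nonneg hneg.le (sq_nonneg (α + 1))]
    · -- lam < 0, μ < 1 + lam, so -1 < lam < 0
      have h1 : α + lam > 0 := by nlinarith
      nlinarith [mul_pos hμ2 hα, mul_nonpos_of_nonpos_of_nonneg hc h1.le]
  · rw [abs_of_pos hpos] at hsep
    have hα : α < 0 := by nlinarith
    rcases hsep with h | h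
    · have hk : 0 < μ ^ 2 - (1 + lam) ^ 2 := by nlinarith
      nlinarith [mul_pos (neg_pos.2 hα) hk, mul_nonneg hpos.le (sq_nonneg (α - 1))]
    · have h1 : α + lam < 0 := by nlinarith
      nlinarith [mul_nonneg (neg_nonneg.2 hc) (neg_nonneg.2 h1.le), mul_pos hμ2 (neg_pos.2 hα)]
end
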